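/- Let f: Γ → Σ and g: Γ' → Σ be bundle scenarios and let α̃: NΓ → NΓ' be a map of simplicial sets with Ng ∘ α̃ = Nf. Then there exists a unique simplicial complex map α: Γ → Γ' such that g ∘ α = f and Nα = α̃. -/

import Mathlib

universe u v w t

namespace Ctx

/-- An abstract simplicial complex on the vertex type `V`: a collection of
nonempty finite subsets of `V` (the simplices/faces), closed under passing to
nonempty subsets, and containing every singleton (so that `V` is exactly the
vertex set). -/
structure SComplex (V : Type u) where
  faces : Set (Set V)
  finite_mem : ∀ σ ∈ faces, Set.Finite σ
  nonempty_mem : ∀ σ ∈ faces, Set.Nonempty σ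
  down_closed : ∀ ⦃σ⦄, σ ∈ faces → ∀ ⦃τ⦄, τ ⊆ σ → τ.Nonempty → τ ∈ faces
  singleton_mem : ∀ x : V, {x} ∈ faces

namespace SComplex

variable {V : Type u} {W : Type v} {V' : Type w} {V'' : Type t}

/-- A map of simplicial complexes: a function on vertices carrying every
simplex (elementwise image) to a simplex. -/
@[ext]
structure Map (Γ : SComplex V) (K : SComplex W) where
  toFun : V → W
  map_faces : ∀ ⦃σ⦄, σ ∈ Γ.faces → toFun '' σ ∈ K.faces

variable {Γ : SComplex V} {K : SComplex W} {K' : SComplex V'}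

/-- The identity simplicial complex map. -/
protected def Map.id (K : SComplex V) : Map K K :=
  ⟨fun x => x, fun σ h => by simpa using h⟩

/-- Composition of simplicial complex maps. -/
def Map.comp {L : SComplex V'} (g : Map K L) (f : Map Γ K) : Map Γ L :=
  ⟨g.toFun ∘ f.toFun, fun σ h => by
    rw [Set.image_comp]; exact g.map_faces (f.map_faces h)⟩

/-- The star of a simplex: all simplices containing it. -/
def star (K : SComplex V) (σ : Set V) : Set (Set V) := {τ | τ ∈ K.faces ∧ σ ⊆ τ}

/-- Surjectivity: every simplex of the target is an image of a simplex. -/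
def Map.Surj (f : Map Γ K) : Prop := ∀ σ ∈ K.faces, ∃ γ ∈ Γ.faces, f.toFun '' γ = σ

/-- Local surjectivity: stars surject onto stars. -/
def Map.LocSurj (f : Map Γ K) : Prop :=
  ∀ γ ∈ Γ.faces, ∀ τ ∈ K.star (f.toFun '' γ), ∃ γ' ∈ Γ.star γ, f.toFun '' γ' = τ

/-- Discreteness over vertices: no edge between distinct vertices with the
same image. -/
def Map.DiscV (f : Map Γ K) : Prop :=
  ∀ x y : V, x ≠ y → f.toFun x = f.toFun y → ({x, y} : Set V) ∉ Γ.faces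

/-- A bundle scenario: a surjective, locally surjective simplicial complex map
that is discrete over vertices. -/
def Map.IsBundle (f : Map Γ K) : Prop := f.Surj ∧ f.LocSurj ∧ f.DiscV

/-- `f` has the right lifting property with respect to `g`. -/
def RLP {A : Type*} {B : Type*} {CA : SComplex A} {CB : SComplex B}
    (g : Map CA CB) (f : Map Γ K) : Prop :=
  ∀ (u : Map CA Γ) (v : Map CB K), f.comp u = v.comp g →
    ∃ h : Map CB Γ, h.comp g = u ∧ f.comp h = v

/-- The full simplicial complex `Δ^n` on `{0, …, n}`. -/
def deltaC (n : ℕ) : SComplex (Fin (n + 1)) where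
  faces := {σ | σ.Nonempty}
  finite_mem := fun σ _ => σ.toFinite
  nonempty_mem := fun _ h => h
  down_closed := fun _ _ _ _ h => h
  singleton_mem := fun x => Set.singleton_nonempty x

/-- The simplicial complex map `Δ^m → Δ^n` induced by a function
`{0,…,m} → {0,…,n}`. -/
def deltaMap {m n : ℕ} (θ : Fin (m + 1) → Fin (n + 1)) : Map (deltaC m) (deltaC n) :=
  ⟨θ, fun _ h => h.image θ⟩

/-- The empty simplicial complex. -/
def emptyC : SComplex Empty where
  faces := ∅
  finite_mem := fun _ h => h.elim
  nonempty_mem := fun _ h => h.elim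
  down_closed := fun _ h => h.elim
  singleton_mem := fun x => x.elim

/-- The inclusion of the empty simplicial complex into `Δ^n`. -/
def emptyToDelta (n : ℕ) : Map emptyC (deltaC n) :=
  ⟨fun x => x.elim, fun _ h => h.elim⟩

/-- The type of faces of a simplicial complex. -/
abbrev Face (K : SComplex V) : Type u := {σ : Set V // σ ∈ K.faces}

/-- The nerve complex `ĤN K`: vertices are the simplices of `K`, and a
nonempty finite set of simplices is a face iff its union is a face of `K`. -/
def nerveC (K : SComplex V) : SComplex K.Face where
  faces := {τ | τ.Finite ∧ τ.Nonempty ∧ (⋃ σ ∈ τ, (σ : Set V)) ∈ K.faces}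
  finite_mem := fun _ h => h.1
  nonempty_mem := fun _ h => h.2.1
  down_closed := by
    intro τ h τ' hsub hne
    refine ⟨h.1.subset hsub, hne, K.down_closed h.2.2 ?_ ?_⟩
    · exact Set.biUnion_subset_biUnion_left hsub
    · obtain ⟨σ, hσ⟩ := hne
      obtain ⟨x, hx⟩ := K.nonempty_mem σ.1 σ.2
      exact ⟨x, Set.mem_biUnion hσ hx⟩
  singleton_mem := fun σ => ⟨Set.finite_singleton σ, Set.singleton_nonempty σ, by
    simpa using σ.2⟩

/-- The map `ĤN f` induced on nerve complexes. -/
def nerveMap (f : Map Γ K) : Map (nerveC Γ) (nerveC K) where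
  toFun γ := ⟨f.toFun '' γ.1, f.map_faces γ.2⟩
  map_faces := by
    intro τ hτ
    refine ⟨hτ.1.image _, hτ.2.1.image _, ?_⟩
    have h : (⋃ σ ∈ (fun γ : Γ.Face => (⟨f.toFun '' γ.1, f.map_faces γ.2⟩ : K.Face)) '' τ,
        (σ : Set W)) = f.toFun '' (⋃ σ ∈ τ, (σ : Set V)) := by
      rw [Set.biUnion_image, Set.image_iUnion₂]
    exact Set.mem_of_eq_of_mem h (f.map_faces hτ.2.2)

/-- The unit `δ : K → ĤN K`, sending a vertex to the singleton simplex. -/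
def deltaHat (K : SComplex V) : Map K (nerveC K) where
  toFun x := ⟨{x}, K.singleton_mem x⟩
  map_faces := by
    intro σ hσ
    refine ⟨(K.finite_mem σ hσ).image _, (K.nonempty_mem σ hσ).image _, ?_⟩
    have h : (⋃ τ ∈ (fun x : V => (⟨{x}, K.singleton_mem x⟩ : K.Face)) '' σ,
        (τ : Set V)) = σ := by
      rw [Set.biUnion_image]
      exact Set.biUnion_of_singleton σ
    exact Set.mem_of_eq_of_mem h hσ

/-- The multiplication `μ : ĤN (ĤN K) → ĤN K` of the nerve complex monad,
sending a set of simplices to its union. -/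
def muMap (K : SComplex V) : Map (nerveC (nerveC K)) (nerveC K) where
  toFun τ := ⟨⋃ σ ∈ τ.1, (σ : Set V), τ.2.2.2⟩
  map_faces := by
    intro T hT
    refine ⟨hT.1.image _, hT.2.1.image _, ?_⟩
    have h : (⋃ σ ∈ (fun τ : (nerveC K).Face =>
          (⟨⋃ σ ∈ τ.1, (σ : Set V), τ.2.2.2⟩ : K.Face)) '' T, (σ : Set V))
        = ⋃ σ ∈ (⋃ τ ∈ T, (τ : Set K.Face)), (σ : Set V) := by
      rw [Set.biUnion_image]
      ext x
      simp only [Set.mem_iUnion, Set.mem_setOf_eq]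
      tauto
    exact Set.mem_of_eq_of_mem h hT.2.2.2.2

/-- The vertex type of the pull-back of `f : Γ → K` along `π : K' → K`. -/
def PB {Γ : SComplex V} {K : SComplex W} {K' : SComplex V'} (f : Map Γ K) (π : Map K' K) :
    Type (max u w) :=
  {q : V × V' // f.toFun q.1 = π.toFun q.2}

/-- The pull-back of `f : Γ → K` along `π : K' → K`: vertices are pairs
`(x, y)` with `f x = π y`, and a set of pairs is a simplex iff both coordinate
projections are simplices. -/
def pullback {Γ : SComplex V} {K : SComplex W} {K' : SComplex V'} (f : Map Γ K) (π : Map K' K) :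
    SComplex (PB f π) where
  faces := {τ | ((fun q : PB f π => q.1.1) '' τ) ∈ Γ.faces ∧
    ((fun q : PB f π => q.1.2) '' τ) ∈ K'.faces}
  finite_mem := by
    intro τ h
    have h1 : (Subtype.val '' τ).Finite := by
      refine Set.Finite.subset (Set.Finite.prod (Γ.finite_mem _ h.1) (K'.finite_mem _ h.2)) ?_
      rintro q ⟨r, hr, rfl⟩
      exact ⟨⟨r, hr, rfl⟩, ⟨r, hr, rfl⟩⟩
    exact Set.Finite.of_finite_image h1 Subtype.val_injective.injOn
  nonempty_mem := fun τ h => Set.Nonempty.of_image (Γ.nonempty_mem _ h.1)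
  down_closed := fun τ h τ' hsub hne =>
    ⟨Γ.down_closed h.1 (Set.image_mono hsub) (hne.image _),
     K'.down_closed h.2 (Set.image_mono hsub) (hne.image _)⟩
  singleton_mem := fun q => by
    constructor
    · simpa using Γ.singleton_mem q.1.1
    · simpa using K'.singleton_mem q.1.2

/-- First projection of the pull-back. -/
def pbFst {Γ : SComplex V} {K : SComplex W} {K' : SComplex V'} (f : Map Γ K) (π : Map K' K) :
    Map (pullback f π) Γ :=
  ⟨fun q => q.1.1, fun _ h => h.1⟩

/-- Second projection of the pull-back (the pulled-back bundle). -/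
def pbSnd {Γ : SComplex V} {K : SComplex W} {K' : SComplex V'} (f : Map Γ K) (π : Map K' K) :
    Map (pullback f π) K' :=
  ⟨fun q => q.1.2, fun _ h => h.2⟩

/-- The event complex `E_O K` of a scenario `(K, O)`: vertices are pairs
`(x, o)` with `o ∈ O x`, and simplices are graphs of outcome assignments over
simplices of `K`. -/
def eventComplex (K : SComplex V) (O : V → Type v) : SComplex ((x : V) × O x) where
  faces := {τ | (Sigma.fst '' τ) ∈ K.faces ∧ Set.InjOn Sigma.fst τ}
  finite_mem := fun _ h => Set.Finite.of_finite_image (K.finite_mem _ h.1) h.2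
  nonempty_mem := fun _ h => Set.Nonempty.of_image (K.nonempty_mem _ h.1)
  down_closed := fun τ h τ' hsub hne =>
    ⟨K.down_closed h.1 (Set.image_mono hsub) (hne.image _), h.2.mono hsub⟩
  singleton_mem := fun p => ⟨by simpa using K.singleton_mem p.1, Set.injOn_singleton _ _⟩

/-- The canonical projection `E_O K → K` of a scenario. -/
def eventProj (K : SComplex V) (O : V → Type v) : Map (eventComplex K O) K :=
  ⟨Sigma.fst, fun _ h => h.1⟩

end SComplex

open SComplex

/-- `R`-distributions on a set `U`: finitely supported `R`-valued functions
summing to `1`. -/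
def Dist (R : Type u) [CommSemiring R] (U : Type v) : Type (max u v) :=
  {p : U →₀ R // p.sum (fun _ r => r) = 1}

/-- Push-forward of distributions along a function. -/
noncomputable def Dist.map {R : Type u} [CommSemiring R] {U : Type v} {U' : Type w} (g : U → U')
    (p : Dist R U) : Dist R U' :=
  ⟨Finsupp.mapDomain g p.1, by
    rw [Finsupp.sum_mapDomain_index (fun _ => rfl) (fun _ _ _ => rfl)]
    exact p.2⟩

/-- The Dirac distribution at a point. -/
noncomputable def Dist.pure {R : Type u} [CommSemiring R] {U : Type v} (u : U) : Dist R U :=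
  ⟨Finsupp.single u 1, by rw [Finsupp.sum_single_index rfl]⟩

namespace SComplex

/-- The fiber of a simplicial complex map over a simplex of the target. -/
abbrev Map.fiber {Γ : SComplex V} {K : SComplex W} (f : Map Γ K) (σ : Set W) : Type u :=
  {γ : Set V // γ ∈ Γ.faces ∧ f.toFun '' γ = σ}

/-- The restriction map between fibers, sending `γ` over `σ` to the
subsimplex of `γ` lying over `σ' ⊆ σ`.  (For bundle scenarios this is the
unique such subsimplex.) -/
def Map.resFiber {Γ : SComplex V} {K : SComplex W} (f : Map Γ K) {σ σ' : Set W}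
    (hσ' : σ' ∈ K.faces) (h : σ' ⊆ σ) (γ : f.fiber σ) : f.fiber σ' := by
  have hne : ({y | y ∈ γ.1 ∧ f.toFun y ∈ σ'} : Set V).Nonempty := by
    obtain ⟨x, hx⟩ := K.nonempty_mem σ' hσ'
    have hx' : x ∈ f.toFun '' γ.1 := (Set.ext_iff.mp γ.2.2 x).mpr (h hx)
    obtain ⟨y, hy, rfl⟩ := hx'
    exact ⟨y, hy, hx⟩
  refine ⟨{y | y ∈ γ.1 ∧ f.toFun y ∈ σ'},
    Γ.down_closed γ.2.1 (fun y hy => hy.1) hne, ?_⟩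
  ext x
  constructor
  · rintro ⟨y, ⟨hy, hfy⟩, rfl⟩
    exact hfy
  · intro hx
    have hx' : x ∈ f.toFun '' γ.1 := (Set.ext_iff.mp γ.2.2 x).mpr (h hx)
    obtain ⟨y, hy, rfl⟩ := hx'
    exact ⟨y, ⟨hy, hx⟩, rfl⟩

/-- An empirical model on a bundle scenario `f : Γ → K`: a compatible family
of distributions on the fibers of `f`. -/
structure EmpiricalModel (R : Type t) [CommSemiring R] {Γ : SComplex V} {K : SComplex W}
    (f : Map Γ K) where
  dist : ∀ σ, σ ∈ K.faces → Dist R (f.fiber σ)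
  compat : ∀ σ (hσ : σ ∈ K.faces) σ' (hσ' : σ' ∈ K.faces) (h : σ' ⊆ σ),
    Dist.map (f.resFiber hσ' h) (dist σ hσ) = dist σ' hσ'

/-- An empirical model on a scenario `(K, O)`: a compatible family of
distributions on joint outcome assignments over each measurement context. -/
structure ScenEmp (R : Type t) [CommSemiring R] (K : SComplex V) (O : V → Type v) where
  dist : ∀ σ, σ ∈ K.faces → Dist R (∀ x : σ, O x.1)
  compat : ∀ σ (hσ : σ ∈ K.faces) σ' (hσ' : σ' ∈ K.faces) (h : σ' ⊆ σ),
    Dist.map (fun (s : ∀ x : σ, O x.1) (x : σ') => s ⟨x.1, h x.2⟩) (dist σ hσ) = dist σ' hσ'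

end SComplex

namespace SComplex

variable {V : Type u} {W : Type v} {V' : Type w}


/-- The defining property of the push-forward `π_* p` of an empirical model
`p` on `f` along a simplicial relation `π : K' → ĤN K` (a simplicial complex
map into the nerve complex): over a simplex `σ'` of `K'`, the value at a fiber
element `γ'` of the pulled-back bundle is the value of `p` over the union
`π̄(σ')` at the union of the first components of `γ'`. -/
def piPushSpec {Γ : SComplex V} {K : SComplex W} {K' : SComplex V'}
    (f : Map Γ K) (π : Map K' (nerveC K)) {R : Type t} [CommSemiring R]
    (p : EmpiricalModel R f) (q : EmpiricalModel R (pbSnd (nerveMap f) π)) : Prop :=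
  ∀ σ' (hσ' : σ' ∈ K'.faces) (γ' : (pbSnd (nerveMap f) π).fiber σ')
    (hu : (⋃ x' ∈ σ', ((π.toFun x' : K.Face) : Set W)) ∈ K.faces)
    (γ : f.fiber (⋃ x' ∈ σ', ((π.toFun x' : K.Face) : Set W))),
    (γ : Set V) = (⋃ r ∈ γ'.1, ((r.1.1 : Γ.Face) : Set V)) →
    (q.dist σ' hσ').1 γ' = (p.dist _ hu).1 γ

/-- The fiber element of the event bundle given by the graph of an outcome
assignment `s` over a simplex `σ`. -/
def graphFiber (K : SComplex V) (O : V → Type v) {σ : Set V} (hσ : σ ∈ K.faces)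
    (s : ∀ x : σ, O x.1) : (eventProj K O).fiber σ := by
  refine ⟨{p : (x : V) × O x | ∃ h : p.1 ∈ σ, p.2 = s ⟨p.1, h⟩}, ⟨?_, ?_⟩, ?_⟩
  · have h : Sigma.fst '' {p : (x : V) × O x | ∃ h : p.1 ∈ σ, p.2 = s ⟨p.1, h⟩} = σ := by
      ext x
      constructor
      · rintro ⟨p, ⟨hp, _⟩, rfl⟩; exact hp
      · intro hx; exact ⟨⟨x, s ⟨x, hx⟩⟩, ⟨hx, rfl⟩, rfl⟩
    exact Set.mem_of_eq_of_mem h hσ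
  · rintro ⟨x₁, o₁⟩ ⟨h₁, ho₁⟩ ⟨x₂, o₂⟩ ⟨h₂, ho₂⟩ hx
    obtain rfl : x₁ = x₂ := hx
    exact congrArg (Sigma.mk x₁) (ho₁.trans ho₂.symm)
  · ext x
    constructor
    · rintro ⟨p, ⟨hp, _⟩, rfl⟩; exact hp
    · intro hx; exact ⟨⟨x, s ⟨x, hx⟩⟩, ⟨hx, rfl⟩, rfl⟩

/-- Push-forward of a fiber element along a map over the base. -/
def pushFiber {Γ : SComplex V} {Γ' : SComplex V'} {K : SComplex W}
    (f : Map Γ K) (g : Map Γ' K) (α : Map Γ Γ') (hc : g.comp α = f) (σ : Set W)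
    (γ : f.fiber σ) : g.fiber σ := by
  refine ⟨α.toFun '' γ.1, α.map_faces γ.2.1, ?_⟩
  rw [← Set.image_comp]
  have h : g.toFun ∘ α.toFun = f.toFun := congrArg Map.toFun hc
  rw [h]
  exact γ.2.2

/-- Sections of a bundle scenario. -/
def BSection {Γ : SComplex V} {K : SComplex W} (f : Map Γ K) : Type _ :=
  {s : Map K Γ // f.comp s = Map.id K}

/-- Evaluation of a section of a bundle scenario at a simplex of the base,
giving an element of the fiber. -/
def BSection.ev {Γ : SComplex V} {K : SComplex W} (f : Map Γ K) (σ : Set W)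
    (hσ : σ ∈ K.faces) (s : BSection f) : f.fiber σ := by
  refine ⟨s.1.toFun '' σ, s.1.map_faces hσ, ?_⟩
  rw [← Set.image_comp]
  have h : f.toFun ∘ s.1.toFun = fun x => x := congrArg Map.toFun s.2
  rw [h, Set.image_id']

/-- Noncontextuality of an empirical model on a bundle scenario: it is a
mixture of deterministic models coming from sections. -/
def BundleNC (R : Type t) [CommSemiring R] {Γ : SComplex V} {K : SComplex W}
    (f : Map Γ K) (p : EmpiricalModel R f) : Prop :=
  ∃ d : Dist R (BSection f), ∀ σ (hσ : σ ∈ K.faces),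
    p.dist σ hσ = Dist.map (BSection.ev f σ hσ) d

/-- Noncontextuality of an empirical model on a scenario `(K, O)`: it is a
mixture of deterministic models coming from global outcome assignments. -/
def ScenNC (R : Type t) [CommSemiring R] (K : SComplex V) (O : V → Type v)
    (e : ScenEmp R K O) : Prop :=
  ∃ d : Dist R (∀ x : V, O x), ∀ σ (hσ : σ ∈ K.faces),
    e.dist σ hσ = Dist.map (fun (g : ∀ x : V, O x) (x : σ) => g x.1) d

end SComplex

end Ctx
namespace Ctx

open CategoryTheory SComplex

/-! ### Simplicial sets: the nerve space of a simplicial complex -/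

/-- The commutative monoid of subsets of `V` under union (with unit `∅`). -/
def UM (V : Type u) : Type u := Set V

namespace UM

/-- View an element of the union monoid as a set. -/
def toSet {V : Type u} (a : UM V) : Set V := a

/-- View a set as an element of the union monoid. -/
def ofSet {V : Type u} (a : Set V) : UM V := a

end UM

instance {V : Type u} : Monoid (UM V) where
  mul a b := UM.ofSet (a.toSet ∪ b.toSet)
  one := UM.ofSet ∅
  mul_assoc a b c := Set.union_assoc _ _ _
  one_mul := Set.empty_union
  mul_one := Set.union_empty

@[simp] lemma UM.toSet_mul {V : Type u} (a b : UM V) :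
    (a * b).toSet = a.toSet ∪ b.toSet := rfl

@[simp] lemma UM.toSet_one {V : Type u} : (1 : UM V).toSet = (∅ : Set V) := rfl

/-- The nerve of the one-object category on the union monoid: the ambient
simplicial set whose `n`-simplices are `n`-tuples of subsets of `V` (recorded
as a composable sequence of arrows). -/
def B (V : Type u) : SSet.{u} := nerve (SingleObj (UM V))

/-- The total subset (the "union of the entries") of a simplex of `B V`:
the value of the corresponding functor on the morphism `0 ⟶ last`. -/
def totM {V : Type u} {Δ : SimplexCategoryᵒᵖ} (x : (B V).obj Δ) : UM V :=
  x.map (homOfLE (Fin.zero_le (Fin.last Δ.unop.len)))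

/-- The total subset of a simplex of `B V`, as a set. -/
def tot {V : Type u} {Δ : SimplexCategoryᵒᵖ} (x : (B V).obj Δ) : Set V :=
  (totM x).toSet

lemma tot_whisker_subset {V : Type u} {m n : ℕ} (g : Fin (m + 1) ⥤ Fin (n + 1))
    (x : ComposableArrows (SingleObj (UM V)) n) :
    UM.toSet ((x.whiskerLeft g).map (homOfLE (Fin.zero_le (Fin.last m))))
      ⊆ UM.toSet (x.map (homOfLE (Fin.zero_le (Fin.last n)))) := by
  intro a ha
  have comp_eq : homOfLE (Fin.zero_le (Fin.last n))
      = homOfLE (Fin.zero_le (g.obj 0)) ≫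
          (g.map (homOfLE (Fin.zero_le (Fin.last m))) ≫
            homOfLE (Fin.le_last (g.obj (Fin.last m)))) :=
    Subsingleton.elim _ _
  have e : x.map (homOfLE (Fin.zero_le (Fin.last n)))
      = x.map (homOfLE (Fin.zero_le (g.obj 0))) ≫
          (x.map (g.map (homOfLE (Fin.zero_le (Fin.last m)))) ≫
            x.map (homOfLE (Fin.le_last (g.obj (Fin.last m))))) := by
    rw [comp_eq, x.map_comp, x.map_comp]
  have ha' : a ∈ UM.toSet (x.map (g.map (homOfLE (Fin.zero_le (Fin.last m))))) := ha
  rw [e, SingleObj.comp_as_mul, SingleObj.comp_as_mul, UM.toSet_mul, UM.toSet_mul]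
  exact Or.inl (Or.inr ha')

lemma tot_map_subset {V : Type u} {Δ Δ' : SimplexCategoryᵒᵖ} (θ : Δ ⟶ Δ')
    (x : (B V).obj Δ) : tot ((B V).map θ x) ⊆ tot x :=
  tot_whisker_subset (SimplexCategory.toCat.map θ.unop).toFunctor x

/-- The nerve space `N K` of a simplicial complex `K`: the simplicial subset
of `B V` consisting of the tuples of subsets whose union is empty or a
simplex of `K`.  (Each entry is then automatically empty or a simplex.) -/
def NC {V : Type u} (K : SComplex V) : SSet.{u} where
  obj Δ := {x : (B V).obj Δ // tot x = ∅ ∨ tot x ∈ K.faces}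
  map θ := TypeCat.ofHom fun x => ⟨(B V).map θ x.1, by
    rcases x.2 with h | h
    · left
      have hsub := tot_map_subset θ x.1
      rw [h] at hsub
      exact Set.subset_empty_iff.mp hsub
    · by_cases h0 : tot ((B V).map θ x.1) = ∅
      · exact Or.inl h0
      · exact Or.inr (K.down_closed h (tot_map_subset θ x.1)
          (Set.nonempty_iff_ne_empty.mpr h0))⟩
  map_id Δ := by
    ext x
    exact congrArg (fun m => m x.1) ((B V).map_id Δ)
  map_comp θ θ' := by
    ext x
    exact congrArg (fun m => m x.1) ((B V).map_comp θ θ')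

/-- The map of ambient simplicial sets induced by a monoid homomorphism of
union monoids. -/
def inducedB {V W : Type u} (h : UM V →* UM W) : B V ⟶ B W where
  app Δ := TypeCat.ofHom fun x => x ⋙ (SingleObj.mapHom (UM V) (UM W)) h
  naturality Δ Δ' θ := rfl

lemma totM_inducedB {V W : Type u} (h : UM V →* UM W) {Δ : SimplexCategoryᵒᵖ}
    (x : (B V).obj Δ) : totM ((inducedB h).app Δ x) = h (totM x) := rfl

/-- The map of nerve spaces induced by a monoid homomorphism of union monoids
carrying faces to faces. -/
def inducedNC {V W : Type u} {Γ : SComplex V} {K : SComplex W} (h : UM V →* UM W)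
    (hh : ∀ σ : Set V, σ ∈ Γ.faces → (h (UM.ofSet σ)).toSet ∈ K.faces) :
    NC Γ ⟶ NC K where
  app Δ := TypeCat.ofHom fun x => ⟨(inducedB h).app Δ x.1, by
    rcases x.2 with h0 | hfc
    · left
      have h1 : totM x.1 = 1 := h0
      show (totM ((inducedB h).app Δ x.1)).toSet = ∅
      rw [totM_inducedB, h1, map_one]
      rfl
    · right
      exact hh (tot x.1) hfc⟩
  naturality Δ Δ' θ := by
    ext x
    exact Subtype.ext (congrArg (fun m => m x.1) ((inducedB h).naturality θ))

/-- The image monoid homomorphism of union monoids induced by a function. -/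
def imageHom {V W : Type u} (f : V → W) : UM V →* UM W where
  toFun a := UM.ofSet (f '' a.toSet)
  map_one' := congrArg UM.ofSet (Set.image_empty f)
  map_mul' a b := congrArg UM.ofSet (Set.image_union f a.toSet b.toSet)

/-- The map of nerve spaces `N f : N Γ → N K` induced by a simplicial complex
map `f : Γ → K`, applying `f` termwise (with `f(∅) = ∅`). -/
def NMap {V W : Type u} {Γ : SComplex V} {K : SComplex W} (f : Map Γ K) :
    NC Γ ⟶ NC K :=
  inducedNC (imageHom f.toFun) (fun _ hσ => f.map_faces hσ)

/-- The union monoid homomorphism induced by a simplicial relation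
`π : K' → ĤN K`. -/
def relHom {V' W : Type u} {K' : SComplex V'} {K : SComplex W}
    (π : Map K' (nerveC K)) : UM V' →* UM W where
  toFun a := UM.ofSet (⋃ x ∈ a.toSet, ((π.toFun x : K.Face) : Set W))
  map_one' := congrArg UM.ofSet (by simp [UM.toSet, UM.ofSet])
  map_mul' a b := congrArg UM.ofSet (Set.biUnion_union a.toSet b.toSet _)

/-- The map of nerve spaces `T(π) : N K' → N K` induced by a simplicial
relation `π : K' → ĤN K`, applying `σ ↦ π̄(σ)` termwise. -/
def Tmap {V' W : Type u} {K' : SComplex V'} {K : SComplex W}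
    (π : Map K' (nerveC K)) : NC K' ⟶ NC K :=
  inducedNC (relHom π) (fun σ hσ => by
    have h2 := (π.map_faces hσ).2.2
    rwa [Set.biUnion_image] at h2)

/-! ### Distributions on simplicial sets -/

/-- The distribution functor on the category of types. -/
noncomputable def DistF (R : Type u) [CommSemiring R] : Type u ⥤ Type u where
  obj U := Dist R U
  map g := TypeCat.ofHom fun p => Dist.map g p
  map_id U := by
    ext p
    exact Subtype.ext Finsupp.mapDomain_id
  map_comp g g' := by
    apply ConcreteCategory.hom_ext
    intro p
    exact Subtype.ext (Finsupp.mapDomain_comp (v := p.1) (f := g) (g := g'))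

/-- The Dirac natural transformation `δ_X : X → D_R X`. -/
noncomputable def diracN (R : Type u) [CommSemiring R] (X : SSet.{u}) :
    X ⟶ X ⋙ DistF R where
  app Δ := TypeCat.ofHom fun x => Dist.pure x
  naturality Δ Δ' θ := by
    ext x
    exact Subtype.ext (Finsupp.mapDomain_single).symm

/-- A simplicial distribution on a simplicial set map `f : E → X`:
a simplicial set map `p : X → D_R E` with `D_R f ∘ p = δ_X`. -/
noncomputable def SDist (R : Type u) [CommSemiring R] {E X : SSet.{u}} (f : E ⟶ X) :
    Type u :=
  {p : X ⟶ E ⋙ DistF R // p ≫ Functor.whiskerRight f (DistF R) = diracN R X}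

/-- Sections of a simplicial set map. -/
def SSetSection {E X : SSet.{u}} (f : E ⟶ X) : Type u := {s : X ⟶ E // s ≫ f = 𝟙 X}

/-- Noncontextuality of a simplicial distribution: it is a mixture of the
deterministic distributions coming from sections, i.e. it is in the image of
`Θ : D_R(sections of f) → sDist(f)`. -/
noncomputable def SSetNC (R : Type u) [CommSemiring R] {E X : SSet.{u}} (f : E ⟶ X)
    (q : SDist R f) : Prop :=
  ∃ d : Dist R (SSetSection f), ∀ (Δ : SimplexCategoryᵒᵖ) (x : X.obj Δ),
    q.1.app Δ x = Dist.map (fun s : SSetSection f => s.1.app Δ x) d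

/-- The defining property of the simplicial distribution `N p` on `N f`
associated to an empirical model `p` on a bundle scenario `f`:
its value on an `n`-simplex `(σ₁,…,σₙ)` of `N K` at `(γ₁,…,γₙ)` is
`p_{σ₁∪⋯∪σₙ}(γ₁∪⋯∪γₙ)` when `(N f)(γ⃗) = σ⃗` and the union is nonempty,
is `0` when `(N f)(γ⃗) ≠ σ⃗`, and is the Dirac distribution at the tuple of
empty sets when all the `σᵢ` are empty. -/
def NpSpec {V W : Type u} {Γ : SComplex V} {K : SComplex W} (f : Map Γ K)
    (R : Type u) [CommSemiring R] (p : EmpiricalModel R f)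
    (q : NC K ⟶ NC Γ ⋙ DistF R) : Prop :=
  (∀ (Δ : SimplexCategoryᵒᵖ) (x : (NC K).obj Δ) (y : (NC Γ).obj Δ),
      (NMap f).app Δ y = x →
      ∀ (hu : tot x.1 ∈ K.faces) (γ : f.fiber (tot x.1)),
        (γ : Set V) = tot y.1 → (q.app Δ x).1 y = (p.dist _ hu).1 γ) ∧
  (∀ (Δ : SimplexCategoryᵒᵖ) (x : (NC K).obj Δ) (y : (NC Γ).obj Δ),
      (NMap f).app Δ y ≠ x → (q.app Δ x).1 y = 0) ∧
  (∀ (Δ : SimplexCategoryᵒᵖ) (x : (NC K).obj Δ), tot x.1 = ∅ →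
      ∀ y : (NC Γ).obj Δ, tot y.1 = ∅ → q.app Δ x = Dist.pure y)

/-- The `i`-th edge of an `n`-simplex of a nerve space. -/
def edgeN {V : Type u} {K : SComplex V} {n : ℕ} (i : Fin n)
    (x : (NC K).obj (Opposite.op (SimplexCategory.mk n))) :
    (NC K).obj (Opposite.op (SimplexCategory.mk 1)) :=
  (NC K).map (SimplexCategory.mkOfSucc i).op x

end Ctx

/-! A map `αt : N Γ → N Γ'` is determined by the set function `A σ := tot (αt (σ))` on
1-simplices: naturality along the edges of a simplex shows that `αt` replaces every entry `σᵢ`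
by `A σᵢ`. Naturality on the 2-simplex `(σ, σ')` makes `A` monotone, and `αt ≫ N g = N f` gives
`g (A σ) = f σ`. As `g` is injective on every simplex (it is discrete over vertices), `A {x}`
is a single vertex `α x`, and `A σ` consists exactly of the `α x` with `x ∈ σ`. So `A` is induced
by the simplicial map `α`, which is unique because `N α` sees `α` on singletons. -/

namespace Ctx
open CategoryTheory SComplex Simplicial Opposite

namespace NC

variable {V : Type u} {K : SComplex V}

def ofFace (K : SComplex V) (σ : Set V) (h : σ = ∅ ∨ σ ∈ K.faces) : (NC K).obj (op ⦋1⦌) :=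
  ⟨ComposableArrows.mk₁ (show SingleObj.star (UM V) ⟶ SingleObj.star (UM V) from UM.ofSet σ), h⟩

lemma ext_of_tot_edgeN {n : ℕ} {x y : (NC K).obj (op ⦋n⦌)}
    (w : ∀ i : Fin n, tot (edgeN i x).1 = tot (edgeN i y).1) : x = y := by
  refine Subtype.ext (ComposableArrows.ext (fun _ => rfl) fun i hi => ?_)
  simp only [eqToHom_refl, Category.comp_id, Category.id_comp]
  exact w ⟨i, hi⟩

lemma ofFace_tot (y : (NC K).obj (op ⦋1⦌)) : ofFace K (tot y.1) y.2 = y :=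
  ext_of_tot_edgeN fun i => by rw [Subsingleton.elim i 0]; rfl

def pair (K : SComplex V) (σ₁ σ₂ : Set V) (h : σ₂ ∪ σ₁ ∈ K.faces) : (NC K).obj (op ⦋2⦌) :=
  ⟨ComposableArrows.mk₂ (show SingleObj.star (UM V) ⟶ SingleObj.star (UM V) from UM.ofSet σ₁)
    (show SingleObj.star (UM V) ⟶ SingleObj.star (UM V) from UM.ofSet σ₂), Or.inr h⟩

end NC

section faceImage

variable {V V' W : Type u} {Γ : SComplex V} {Γ' : SComplex V'} {K : SComplex W}

open Classical in
/-- The set `αt` assigns to the 1-simplex `(σ)`, taken to be `∅` when `σ` is neither empty nor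
a simplex. -/
noncomputable def faceImage (αt : NC Γ ⟶ NC Γ') (σ : Set V) : Set V' :=
  if h : σ = ∅ ∨ σ ∈ Γ.faces then tot (αt.app _ (NC.ofFace Γ σ h)).1 else ∅

lemma tot_app_edge (αt : NC Γ ⟶ NC Γ') (y : (NC Γ).obj (op ⦋1⦌)) :
    tot (αt.app _ y).1 = faceImage αt (tot y.1) := by
  rw [faceImage, dif_pos y.2, NC.ofFace_tot]

lemma tot_app (αt : NC Γ ⟶ NC Γ') {n : ℕ} (x : (NC Γ).obj (op ⦋n⦌)) :
    tot (αt.app _ x).1 = faceImage αt (tot x.1) := by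
  -- the long edge `0 ⟶ n` of a simplex has the total set of the simplex as its entry
  let d := SimplexCategory.mkOfLe 0 (Fin.last n) (Fin.zero_le _)
  calc tot (αt.app _ x).1 = tot ((NC Γ').map d.op (αt.app _ x)).1 := rfl
    _ = tot (αt.app _ ((NC Γ).map d.op x)).1 := by rw [← NatTrans.naturality_apply]
    _ = faceImage αt (tot x.1) := tot_app_edge αt _

lemma tot_edgeN_app (αt : NC Γ ⟶ NC Γ') {n : ℕ} (x : (NC Γ).obj (op ⦋n⦌)) (i : Fin n) :
    tot (edgeN i (αt.app _ x)).1 = faceImage αt (tot (edgeN i x).1) := by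
  rw [edgeN, ← NatTrans.naturality_apply, tot_app_edge]
  rfl

lemma faceImage_mono (αt : NC Γ ⟶ NC Γ') {σ σ' : Set V} (hσ' : σ' ∈ Γ.faces) (hσσ' : σ ⊆ σ') :
    faceImage αt σ ⊆ faceImage αt σ' := by
  have hu : σ' ∪ σ = σ' := Set.union_eq_self_of_subset_right hσσ'
  let t := NC.pair Γ σ σ' (by rwa [hu])
  calc faceImage αt σ = tot (edgeN 0 (αt.app _ t)).1 := (tot_edgeN_app αt t 0).symm
    _ ⊆ tot (αt.app _ t).1 := tot_map_subset _ _
    _ = faceImage αt σ' := by rw [tot_app]; exact congrArg _ hu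

lemma ext_of_faceImage {αt βt : NC Γ ⟶ NC Γ'}
    (h : ∀ σ, σ = ∅ ∨ σ ∈ Γ.faces → faceImage αt σ = faceImage βt σ) : αt = βt := by
  refine NatTrans.ext (funext fun Δ => ConcreteCategory.hom_ext _ _ fun x => ?_)
  refine NC.ext_of_tot_edgeN (n := Δ.unop.len) fun i => ?_
  rw [tot_edgeN_app, tot_edgeN_app]
  exact h _ (edgeN i x).2

lemma faceImage_NMap (α : Map Γ K) {σ : Set V} (hσ : σ = ∅ ∨ σ ∈ Γ.faces) :
    faceImage (NMap α) σ = α.toFun '' σ := by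
  rw [faceImage, dif_pos hσ]
  rfl

lemma faceImage_comp_NMap (αt : NC Γ ⟶ NC Γ') (g : Map Γ' K) {σ : Set V}
    (hσ : σ = ∅ ∨ σ ∈ Γ.faces) :
    faceImage (αt ≫ NMap g) σ = g.toFun '' faceImage αt σ := by
  rw [faceImage, faceImage, dif_pos hσ, dif_pos hσ]
  rfl

lemma NMap_injective : Function.Injective (NMap : Map Γ K → (NC Γ ⟶ NC K)) := by
  intro α β h
  ext x : 2
  have hx := congrArg (faceImage · {x}) h
  simp only [faceImage_NMap (σ := {x}) _ (Or.inr (Γ.singleton_mem x)),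
    Set.image_singleton, Set.singleton_eq_singleton_iff] at hx
  exact hx

end faceImage

lemma SComplex.Map.DiscV.eq_of_mem_face {V' W : Type*} {Γ' : SComplex V'} {K : SComplex W}
    {g : Map Γ' K} (hg : g.DiscV) {τ : Set V'} (hτ : τ ∈ Γ'.faces) {y y' : V'} (hy : y ∈ τ)
    (hy' : y' ∈ τ) (h : g.toFun y = g.toFun y') : y = y' := by
  by_contra hne
  refine hg y y' hne h (Γ'.down_closed hτ ?_ (Set.insert_nonempty _ _))
  exact Set.insert_subset hy (Set.singleton_subset_iff.mpr hy')

section lift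

variable {V V' W : Type u} {Γ : SComplex V} {Γ' : SComplex V'} {K : SComplex W}
  {f : Map Γ K} {g : Map Γ' K} {αt : NC Γ ⟶ NC Γ'}

lemma image_faceImage (hcomm : αt ≫ NMap g = NMap f) {σ : Set V}
    (hσ : σ = ∅ ∨ σ ∈ Γ.faces) : g.toFun '' faceImage αt σ = f.toFun '' σ := by
  rw [← faceImage_comp_NMap αt g hσ, hcomm, faceImage_NMap f hσ]

lemma faceImage_empty (hcomm : αt ≫ NMap g = NMap f) : faceImage αt ∅ = ∅ := by
  simpa using image_faceImage hcomm (Or.inl rfl)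

lemma faceImage_mem_faces (hcomm : αt ≫ NMap g = NMap f) {σ : Set V} (hσ : σ ∈ Γ.faces) :
    faceImage αt σ ∈ Γ'.faces := by
  have hne : (faceImage αt σ).Nonempty := by
    rw [← Set.image_nonempty (f := g.toFun), image_faceImage hcomm (Or.inr hσ)]
    exact (Γ.nonempty_mem σ hσ).image _
  rw [faceImage, dif_pos (Or.inr hσ)] at hne ⊢
  exact (αt.app _ _).2.resolve_left hne.ne_empty

noncomputable def vertexLift (hcomm : αt ≫ NMap g = NMap f) (x : V) : V' :=
  (Γ'.nonempty_mem _ (faceImage_mem_faces hcomm (Γ.singleton_mem x))).some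

lemma vertexLift_mem_faceImage (hcomm : αt ≫ NMap g = NMap f) {σ : Set V} (hσ : σ ∈ Γ.faces)
    {x : V} (hx : x ∈ σ) : vertexLift hcomm x ∈ faceImage αt σ :=
  faceImage_mono αt hσ (Set.singleton_subset_iff.mpr hx) (Set.Nonempty.some_mem _)

lemma map_vertexLift (hcomm : αt ≫ NMap g = NMap f) (x : V) :
    g.toFun (vertexLift hcomm x) = f.toFun x := by
  have h := image_faceImage hcomm (Or.inr (Γ.singleton_mem x))
  rw [Set.image_singleton] at h
  have hx := Set.mem_image_of_mem g.toFun
    (vertexLift_mem_faceImage hcomm (Γ.singleton_mem x) (Set.mem_singleton x))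
  rwa [h] at hx

lemma faceImage_eq_image_vertexLift (hcomm : αt ≫ NMap g = NMap f) (hg : g.DiscV) {σ : Set V}
    (hσ : σ ∈ Γ.faces) : faceImage αt σ = vertexLift hcomm '' σ := by
  ext y
  constructor
  · intro hy
    obtain ⟨x, hx, hxy⟩ : g.toFun y ∈ f.toFun '' σ :=
      image_faceImage hcomm (Or.inr hσ) ▸ Set.mem_image_of_mem _ hy
    refine ⟨x, hx, hg.eq_of_mem_face (faceImage_mem_faces hcomm hσ)
      (vertexLift_mem_faceImage hcomm hσ hx) hy ?_⟩
    rw [map_vertexLift, hxy]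
  · rintro ⟨x, hx, rfl⟩
    exact vertexLift_mem_faceImage hcomm hσ hx

noncomputable def liftMap (hcomm : αt ≫ NMap g = NMap f) (hg : g.DiscV) : Map Γ Γ' :=
  ⟨vertexLift hcomm, fun _ hσ =>
    faceImage_eq_image_vertexLift hcomm hg hσ ▸ faceImage_mem_faces hcomm hσ⟩

lemma comp_liftMap (hcomm : αt ≫ NMap g = NMap f) (hg : g.DiscV) :
    g.comp (liftMap hcomm hg) = f :=
  Map.ext (funext (map_vertexLift hcomm))

lemma NMap_liftMap (hcomm : αt ≫ NMap g = NMap f) (hg : g.DiscV) :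
    NMap (liftMap hcomm hg) = αt := by
  refine ext_of_faceImage fun σ hσ => ?_
  rw [faceImage_NMap _ hσ]
  rcases hσ with rfl | hσ
  · rw [Set.image_empty, faceImage_empty hcomm]
  · exact (faceImage_eq_image_vertexLift hcomm hg hσ).symm

end lift

theorem statement_18_general {V V' W : Type u} {Γ : SComplex V} {Γ' : SComplex V'}
    {K : SComplex W} (f : Map Γ K) (g : Map Γ' K)
    (hg : g.IsBundle)
    (αt : NC Γ ⟶ NC Γ') (hcomm : αt ≫ NMap g = NMap f) :
    ∃! α : Map Γ Γ', g.comp α = f ∧ NMap α = αt :=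
  ⟨liftMap hcomm hg.2.2, ⟨comp_liftMap hcomm hg.2.2, NMap_liftMap hcomm hg.2.2⟩,
    fun _ hβ => NMap_injective (hβ.2.trans (NMap_liftMap hcomm hg.2.2).symm)⟩

/-- a simplicial set map between nerve spaces of bundle
scenarios over the base comes from a unique simplicial complex map over the
base. -/
theorem statement_18 {V V' W : Type u} {Γ : SComplex V} {Γ' : SComplex V'}
    {K : SComplex W} (f : Map Γ K) (g : Map Γ' K)
    (hf : f.IsBundle) (hg : g.IsBundle)
    (αt : NC Γ ⟶ NC Γ') (hcomm : αt ≫ NMap g = NMap f) :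
    ∃! α : Map Γ Γ', g.comp α = f ∧ NMap α = αt :=
  statement_18_general f g hg αt hcomm

end Ctx
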